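/- arXiv:1003.2179 — 2 statements merged into one kernel-verified Lean document; each statement's English description precedes it below -/
import Mathlib

section
/- Let μ(u) ∈ 1 + u⁻¹ℂ[[u⁻¹]]. Then μ(−u) ⇒ μ(u) if and only if there exists γ(u) ∈ 1 + u⁻²ℂ[[u⁻²]] (an even power series) such that γ(u)μ(u) = (1−a₁u⁻¹)(1−a₂u⁻¹)⋯(1−a_{2k}u⁻¹) for some complex numbers a₁,…,a_{2k} satisfying a_{2i−1} + a_{2i} ∈ ℤ_{≥0} for each i = 1,…,k. -/
open PowerSeries Polynomial

noncomputable section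

abbrev PS := PowerSeries ℂ

/-- `f ∈ 1 + u⁻¹ℂ[[u⁻¹]]`, with `X` playing the role of `u⁻¹`. -/
def One1 (f : PS) : Prop := PowerSeries.constantCoeff f = 1

/-- `f ∈ 1 + u⁻²ℂ[[u⁻²]]`: an even power series with constant term 1. -/
def EvenOne (f : PS) : Prop := One1 f ∧ ∀ n, Odd n → PowerSeries.coeff n f = 0

/-- `u^{-deg P}·P(u)` viewed as a power series in `X = u⁻¹`. -/
def lowerP (P : Polynomial ℂ) : PS := (P.reverse : PowerSeries ℂ)

/-- `f → g`: there is a monic `P` with `f/g = P(u+1)/P(u)`. -/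
def Arrow (f g : PS) : Prop :=
  ∃ P : Polynomial ℂ, P.Monic ∧ f * lowerP P = g * lowerP (P.comp (Polynomial.X + 1))

/-- `f ⇒ g`: there is a monic `P` of even degree with `P(u) = P(1−u)` and
`f/g = P(u+1)/P(u)`. -/
def DArrow (f g : PS) : Prop :=
  ∃ P : Polynomial ℂ, P.Monic ∧ Even P.natDegree ∧ P.comp (1 - Polynomial.X) = P ∧
    f * lowerP P = g * lowerP (P.comp (Polynomial.X + 1))

/-- `f(−u)`, i.e. `u⁻¹ ↦ −u⁻¹`. -/
def negU (f : PS) : PS := PowerSeries.rescale (-1) f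

/-- the factor `1 + a·u⁻¹`. -/
def linF (a : ℂ) : PS := 1 + PowerSeries.C a * PowerSeries.X

/-- `f` is a polynomial in `u⁻¹`. -/
def IsPolyPS (f : PS) : Prop := ∃ Q : Polynomial ℂ, (Q : PS) = f

/-- `z ∈ ℤ_{≥0}` (so `a ≥ b` iff `IsNonnegInt (a - b)`). -/
def IsNonnegInt (z : ℂ) : Prop := ∃ n : ℕ, z = n

/-! With `lowerP P = u^{-deg P} P(u)` read as a series in `u⁻¹`, the symmetry `P(1 - u) = P(u)`
of a monic `P` makes `lowerP (P(u + 1))` the reflection `u ↦ -u` of `lowerP P`, since the roots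
of `P` are permuted by `r ↦ 1 - r`. Hence `μ(-u) ⇒ μ(u)` via `P` says exactly that
`γ = lowerP P / μ` is even, and pairing each root `r` with `1 - r` gives the factorization with
`a_{2i-1} + a_{2i} = 1`.

Conversely, `⇒` is multiplicative and survives cancelling a common factor `γ`, so it suffices to
treat one pair `a + b = n ∈ ℕ`: there `P = ∏_{j<n} (u - a + j)(u - b + j)` works, because
`(u + a) ∏_{j<n} (u - b + j) = (u - b) ∏_{j<n} (u + 1 - b + j)` telescopes. -/

def lowerPHom : ℂ[X] →* PS where
  toFun := lowerP
  map_one' := by rw [lowerP, ← Polynomial.C_1, reverse_C, Polynomial.coe_C, map_one]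
  map_mul' P Q := by simp only [lowerP, reverse_mul_of_domain, Polynomial.coe_mul]

lemma lowerP_mul (P Q : ℂ[X]) : lowerP (P * Q) = lowerP P * lowerP Q :=
  lowerPHom.map_mul P Q

lemma lowerP_X_sub_C (a : ℂ) : lowerP (Polynomial.X - Polynomial.C a) = linF (-a) := by
  rw [lowerP, sub_eq_add_neg, ← Polynomial.C_neg, reverse_add_C]
  simpa [linF, ← Polynomial.C_1, -map_one] using reverse_mul_X (1 : ℂ[X])

lemma lowerP_X_add_C (a : ℂ) : lowerP (Polynomial.X + Polynomial.C a) = linF a := by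
  simpa using lowerP_X_sub_C (-a)

lemma one1_lowerP {P : ℂ[X]} (hP : P.Monic) : One1 (lowerP P) := by
  rw [One1, lowerP, ← PowerSeries.coeff_zero_eq_constantCoeff_apply, Polynomial.coeff_coe,
    coeff_zero_reverse, hP.leadingCoeff]

lemma lowerP_eq_prod_roots {P : ℂ[X]} (hP : P.Monic) :
    lowerP P = (P.roots.map fun r => linF (-r)).prod := by
  conv_lhs => rw [(IsAlgClosed.splits P).eq_prod_roots_of_monic hP]
  change lowerPHom _ = _
  rw [map_multiset_prod, Multiset.map_map]
  exact congrArg _ (Multiset.map_congr rfl fun r _ => lowerP_X_sub_C r)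

lemma negU_linF (a : ℂ) : negU (linF a) = linF (-a) := by
  ext n
  simp only [negU, linF, PowerSeries.coeff_rescale, map_add, PowerSeries.coeff_one,
    PowerSeries.coeff_C_mul, PowerSeries.coeff_X]
  split_ifs <;> simp_all

lemma negU_mul (f g : PS) : negU (f * g) = negU f * negU g :=
  map_mul _ f g

lemma negU_prod {ι : Type*} (s : Finset ι) (f : ι → PS) :
    negU (∏ i ∈ s, f i) = ∏ i ∈ s, negU (f i) :=
  map_prod _ f s

lemma constantCoeff_negU (f : PS) :
    PowerSeries.constantCoeff (negU f) = PowerSeries.constantCoeff f := by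
  rw [← PowerSeries.coeff_zero_eq_constantCoeff_apply,
    ← PowerSeries.coeff_zero_eq_constantCoeff_apply, negU, PowerSeries.coeff_rescale, pow_zero,
    one_mul]

lemma negU_eq_self_iff (f : PS) : negU f = f ↔ ∀ n, Odd n → PowerSeries.coeff n f = 0 := by
  simp only [PowerSeries.ext_iff, negU, PowerSeries.coeff_rescale]
  refine forall_congr' fun n => ?_
  rcases n.even_or_odd with hn | hn
  · simp [hn.neg_one_pow, Nat.not_odd_iff_even.mpr hn]
  · simp [hn.neg_one_pow, hn, neg_eq_iff_add_eq_zero, ← two_mul]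

lemma evenOne_iff (f : PS) : EvenOne f ↔ One1 f ∧ negU f = f := by
  rw [EvenOne, negU_eq_self_iff]

lemma One1.ne_zero {f : PS} (hf : One1 f) : f ≠ 0 := by
  rintro rfl
  simp [One1] at hf

lemma evenOne_mul_inv {μ F : PS} (hμ : One1 μ) (hF : One1 F)
    (h : negU μ * F = μ * negU F) : EvenOne (F * μ⁻¹) := by
  have hμinv : μ⁻¹ * μ = 1 := PowerSeries.inv_mul_cancel μ (by rw [hμ]; exact one_ne_zero)
  have hnegμ : One1 (negU μ) := by rw [One1, constantCoeff_negU, hμ]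
  refine (evenOne_iff _).2 ⟨?_, mul_right_cancel₀ hnegμ.ne_zero ?_⟩
  · rw [One1, map_mul, PowerSeries.constantCoeff_inv, hF, hμ, inv_one, mul_one]
  · calc negU (F * μ⁻¹) * negU μ = negU (F * (μ⁻¹ * μ)) := by
          rw [negU_mul, negU_mul, negU_mul, mul_assoc]
      _ = μ⁻¹ * μ * negU F := by rw [hμinv, mul_one, one_mul]
      _ = F * μ⁻¹ * negU μ := by rw [mul_assoc, ← h]; ring

namespace DArrow

variable {f g f' g' : PS}

lemma one : DArrow 1 1 :=
  ⟨1, monic_one, by simp, by simp, by simp⟩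

lemma mul (h : DArrow f g) (h' : DArrow f' g') : DArrow (f * f') (g * g') := by
  obtain ⟨P, hPm, hPe, hPs, hP⟩ := h
  obtain ⟨Q, hQm, hQe, hQs, hQ⟩ := h'
  refine ⟨P * Q, hPm.mul hQm, ?_, ?_, ?_⟩
  · rw [hPm.natDegree_mul hQm]
    exact hPe.add hQe
  · rw [Polynomial.mul_comp, hPs, hQs]
  · simp only [Polynomial.mul_comp, lowerP_mul]
    linear_combination f' * lowerP Q * hP + g * lowerP (P.comp (Polynomial.X + 1)) * hQ

lemma prod {ι : Type*} (s : Finset ι) (f g : ι → PS) (h : ∀ i ∈ s, DArrow (f i) (g i)) :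
    DArrow (∏ i ∈ s, f i) (∏ i ∈ s, g i) := by
  classical
  induction s using Finset.induction_on with
  | empty => simpa using one
  | insert i s hi ih =>
    rw [Finset.prod_insert hi, Finset.prod_insert hi]
    exact (h i (Finset.mem_insert_self i s)).mul
      (ih fun j hj => h j (Finset.mem_insert_of_mem hj))

lemma of_mul_left {γ : PS} (hγ : γ ≠ 0) (h : DArrow (γ * f) (γ * g)) : DArrow f g := by
  obtain ⟨P, hPm, hPe, hPs, hP⟩ := h
  exact ⟨P, hPm, hPe, hPs, mul_left_cancel₀ hγ (by rw [← mul_assoc, hP, mul_assoc])⟩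

end DArrow

section ShiftedAscPochhammer

variable {R : Type*} [CommRing R]

def shiftedAscPochhammer (a : R) (n : ℕ) : R[X] :=
  (ascPochhammer R n).comp (Polynomial.X - Polynomial.C a)

lemma monic_shiftedAscPochhammer [IsDomain R] (a : R) (n : ℕ) :
    (shiftedAscPochhammer a n).Monic :=
  (monic_ascPochhammer R n).comp (monic_X_sub_C a) (by rw [natDegree_X_sub_C]; exact one_ne_zero)

lemma natDegree_shiftedAscPochhammer [IsDomain R] (a : R) (n : ℕ) :
    (shiftedAscPochhammer a n).natDegree = n := by
  rw [shiftedAscPochhammer, natDegree_comp, ascPochhammer_natDegree, natDegree_X_sub_C, mul_one]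

lemma shiftedAscPochhammer_comp_X_add_one {a b : R} {n : ℕ} (h : a + b = n) :
    (Polynomial.X - Polynomial.C b) * (shiftedAscPochhammer b n).comp (Polynomial.X + 1) =
      shiftedAscPochhammer b n * (Polynomial.X + Polynomial.C a) := by
  have hl := congrArg (·.comp (Polynomial.X - Polynomial.C b)) (ascPochhammer_succ_left R n)
  have hr := congrArg (·.comp (Polynomial.X - Polynomial.C b)) (ascPochhammer_succ_right R n)
  simp only [Polynomial.mul_comp, Polynomial.X_comp, Polynomial.comp_assoc, Polynomial.add_comp,
    Polynomial.one_comp, Polynomial.natCast_comp] at hl hr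
  have hshift : (Polynomial.X - Polynomial.C b).comp (Polynomial.X + 1) =
      Polynomial.X - Polynomial.C b + 1 := by
    rw [Polynomial.sub_comp, Polynomial.X_comp, Polynomial.C_comp]
    ring
  have hC : Polynomial.C a = (n : R[X]) - Polynomial.C b := by
    rw [← map_natCast Polynomial.C, ← h, map_add]
    ring
  rw [shiftedAscPochhammer, Polynomial.comp_assoc, hshift, ← hl, hr, hC]
  ring

lemma shiftedAscPochhammer_comp_one_sub [IsDomain R] [Infinite R] {a b : R} {n : ℕ}
    (h : a + b = n) :
    (shiftedAscPochhammer a n).comp (1 - Polynomial.X) = (-1) ^ n * shiftedAscPochhammer b n := by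
  refine Polynomial.funext fun x => ?_
  simp only [shiftedAscPochhammer, Polynomial.eval_comp, Polynomial.eval_mul, Polynomial.eval_sub,
    Polynomial.eval_X, Polynomial.eval_C, Polynomial.eval_one, Polynomial.eval_pow,
    Polynomial.eval_neg]
  rw [show 1 - x - a = -(x - b + n - 1) by rw [← h]; ring,
    ascPochhammer_eval_neg_eq_descPochhammer, descPochhammer_eval_eq_ascPochhammer]
  ring_nf

end ShiftedAscPochhammer

lemma dArrow_linF_mul_linF {a b : ℂ} (hab : IsNonnegInt (a + b)) :
    DArrow (linF a * linF b) (linF (-a) * linF (-b)) := by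
  obtain ⟨n, h⟩ := hab
  have hba : b + a = n := by rw [add_comm, h]
  set P := shiftedAscPochhammer a n * shiftedAscPochhammer b n
  have hP : (Polynomial.X + Polynomial.C a) * (Polynomial.X + Polynomial.C b) * P =
      (Polynomial.X - Polynomial.C a) * (Polynomial.X - Polynomial.C b) *
        P.comp (Polynomial.X + 1) := by
    rw [Polynomial.mul_comp]
    calc _ = shiftedAscPochhammer a n * (Polynomial.X + Polynomial.C b) *
          (shiftedAscPochhammer b n * (Polynomial.X + Polynomial.C a)) := by ring
      _ = _ := by
        rw [← shiftedAscPochhammer_comp_X_add_one h, ← shiftedAscPochhammer_comp_X_add_one hba]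
        ring
  refine ⟨P, (monic_shiftedAscPochhammer a n).mul (monic_shiftedAscPochhammer b n), ?_, ?_, ?_⟩
  · rw [(monic_shiftedAscPochhammer a n).natDegree_mul (monic_shiftedAscPochhammer b n),
      natDegree_shiftedAscPochhammer, natDegree_shiftedAscPochhammer]
    exact ⟨n, rfl⟩
  · rw [Polynomial.mul_comp, shiftedAscPochhammer_comp_one_sub h,
      shiftedAscPochhammer_comp_one_sub hba, mul_mul_mul_comm, ← pow_add,
      Even.neg_one_pow ⟨n, rfl⟩, one_mul, mul_comm]
  · have := congrArg lowerP hP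
    simpa only [lowerP_mul, lowerP_X_add_C, lowerP_X_sub_C] using this

lemma Finset.prod_range_two_mul {M : Type*} [CommMonoid M] (k : ℕ) (f : ℕ → M) :
    ∏ i ∈ Finset.range (2 * k), f i = ∏ i ∈ Finset.range k, f (2 * i) * f (2 * i + 1) := by
  induction k with
  | zero => simp
  | succ k ih =>
    rw [Nat.mul_succ, Finset.prod_range_succ, Finset.prod_range_succ, Finset.prod_range_succ, ih,
      mul_assoc]

lemma Polynomial.roots_map_one_sub_eq_self {R : Type*} [CommRing R] [IsDomain R] {P : R[X]}
    (hP : P.comp (1 - Polynomial.X) = P) : P.roots.map (fun x => 1 - x) = P.roots := by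
  have h := map_roots_comp_C_mul_X_add_C P (-1) 1 isUnit_neg_one
  rwa [show Polynomial.C (-1 : R) * Polynomial.X + Polynomial.C 1 = 1 - Polynomial.X by
      rw [map_neg, map_one]; ring,
    hP, show (fun x : R => -1 * x + 1) = (fun x => 1 - x) by ext; ring] at h

lemma Polynomial.roots_comp_X_add_one {R : Type*} [CommRing R] [IsDomain R] (P : R[X]) :
    (P.comp (Polynomial.X + 1)).roots = P.roots.map (fun x => x - 1) := by
  simpa using roots_comp_C_mul_X_add_C P 1 1 isUnit_one

lemma lowerP_comp_X_add_one {P : ℂ[X]} (hPm : P.Monic) (hPs : P.comp (1 - Polynomial.X) = P) :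
    lowerP (P.comp (Polynomial.X + 1)) = negU (lowerP P) := by
  have hPm' : (P.comp (Polynomial.X + 1)).Monic := by simpa using hPm.comp_X_add_C 1
  rw [lowerP_eq_prod_roots hPm, lowerP_eq_prod_roots hPm', roots_comp_X_add_one, negU,
    map_multiset_prod, Multiset.map_map, Multiset.map_map]
  conv_lhs => rw [← roots_map_one_sub_eq_self hPs, Multiset.map_map]
  refine congrArg _ (Multiset.map_congr rfl fun r _ => ?_)
  simp only [Function.comp_apply, sub_sub_cancel_left, neg_neg]
  rw [← negU, negU_linF, neg_neg]

section Pairing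

variable {R : Type*} [CommRing R] [IsDomain R] [NeZero (2 : R)]

lemma Multiset.exists_eq_cons_cons_one_sub {S : Multiset R} (hS : S.map (fun x => 1 - x) = S)
    (hcard : 2 ≤ card S) :
    ∃ x T, S = x ::ₘ (1 - x) ::ₘ T ∧ T.map (fun x => 1 - x) = T := by
  classical
  have hpair : ∃ x ∈ S, 1 - x ∈ S.erase x := by
    by_cases h : ∃ x ∈ S, 1 - x ≠ x
    · obtain ⟨x, hx, hne⟩ := h
      exact ⟨x, hx, (mem_erase_of_ne hne).2 (hS ▸ mem_map_of_mem _ hx)⟩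
    · -- every element of `S` is `1 / 2`, and there are at least two of them
      push Not at h
      obtain ⟨x, hx⟩ := card_pos_iff_exists_mem.1 (by omega : 0 < card S)
      obtain ⟨y, hy⟩ := card_pos_iff_exists_mem.1
        (by have := card_erase_add_one hx; omega : 0 < card (S.erase x))
      have hyx : y = x := mul_left_cancel₀ (NeZero.ne (2 : R)) <| by
        linear_combination h x hx - h y (mem_of_mem_erase hy)
      subst hyx
      exact ⟨y, hx, by rwa [h y hx]⟩
  obtain ⟨x, hx, hx'⟩ := hpair
  refine ⟨x, (S.erase x).erase (1 - x), by rw [cons_erase hx', cons_erase hx], ?_⟩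
  rw [map_erase _ (sub_right_injective), map_erase _ (sub_right_injective), hS, sub_sub_cancel,
    erase_comm]

lemma Multiset.exists_pairing_of_map_one_sub_eq {k : ℕ} {S : Multiset R}
    (hS : S.map (fun x => 1 - x) = S) (hcard : card S = 2 * k) :
    ∃ a : ℕ → R, S = (range (2 * k)).map a ∧ ∀ i < k, a (2 * i) + a (2 * i + 1) = 1 := by
  induction k generalizing S with
  | zero => exact ⟨fun _ => 0, by simpa using hcard, by simp⟩
  | succ k ih =>
    obtain ⟨x, T, rfl, hT⟩ := exists_eq_cons_cons_one_sub hS (by omega)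
    obtain ⟨a, rfl, ha⟩ := ih hT (by rw [card_cons, card_cons] at hcard; omega)
    refine ⟨fun i => if i < 2 * k then a i else if i = 2 * k then x else 1 - x, ?_, ?_⟩
    · rw [show 2 * (k + 1) = 2 * k + 1 + 1 by ring, range_succ, range_succ, map_cons, map_cons,
        cons_swap]
      simp only [lt_irrefl, if_false, if_true, show ¬ 2 * k + 1 < 2 * k by omega,
        show 2 * k + 1 ≠ 2 * k by omega]
      congr 2
      exact map_congr rfl fun i hi => (if_pos (mem_range.1 hi)).symm
    · intro i hi
      rcases Nat.lt_succ_iff_lt_or_eq.1 hi with hi | rfl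
      · simpa [show 2 * i < 2 * k by omega, show 2 * i + 1 < 2 * k by omega] using ha i hi
      · simp

end Pairing

lemma exists_lowerP_eq_prod_paired {P : ℂ[X]} {k : ℕ} (hPm : P.Monic)
    (hPs : P.comp (1 - Polynomial.X) = P) (hk : P.natDegree = 2 * k) :
    ∃ a : ℕ → ℂ, lowerP P = ∏ i ∈ Finset.range (2 * k), linF (-a i) ∧
      ∀ i < k, a (2 * i) + a (2 * i + 1) = 1 := by
  obtain ⟨a, hroots, hpair⟩ := Multiset.exists_pairing_of_map_one_sub_eq
    (roots_map_one_sub_eq_self hPs) (by rw [IsAlgClosed.card_roots_eq_natDegree, hk])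
  refine ⟨a, ?_, hpair⟩
  rw [lowerP_eq_prod_roots hPm, hroots, Multiset.map_map, Finset.prod_eq_multiset_prod,
    Finset.range_val]
  rfl

lemma dArrow_prod_linF {k : ℕ} {a : ℕ → ℂ}
    (h : ∀ i < k, IsNonnegInt (a (2 * i) + a (2 * i + 1))) :
    DArrow (∏ i ∈ Finset.range (2 * k), linF (a i))
      (∏ i ∈ Finset.range (2 * k), linF (-a i)) := by
  rw [Finset.prod_range_two_mul, Finset.prod_range_two_mul]
  exact DArrow.prod _ _ _ fun i hi => dArrow_linF_mul_linF (h i (Finset.mem_range.1 hi))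

/-- μ(−u) ⇒ μ(u) iff some even γ makes γ·μ a product (1−a₁u⁻¹)⋯(1−a_{2k}u⁻¹) with
a_{2i−1} + a_{2i} ∈ ℤ_{≥0}. -/
theorem darrow_iff_paired_factorization (μ : PS) (hμ : One1 μ) :
    DArrow (negU μ) μ ↔
      ∃ (k : ℕ) (a : ℕ → ℂ) (γ : PS), EvenOne γ ∧
        (∀ i < k, IsNonnegInt (a (2*i) + a (2*i+1))) ∧
        γ * μ = ∏ i ∈ Finset.range (2*k), linF (-(a i)) := by
  constructor
  · rintro ⟨P, hPm, ⟨k, hk⟩, hPs, hP⟩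
    rw [lowerP_comp_X_add_one hPm hPs] at hP
    obtain ⟨a, hPa, hpair⟩ := exists_lowerP_eq_prod_paired hPm hPs (by rw [hk, two_mul])
    refine ⟨k, a, lowerP P * μ⁻¹, evenOne_mul_inv hμ (one1_lowerP hPm) hP,
      fun i hi => ⟨1, by rw [hpair i hi, Nat.cast_one]⟩, ?_⟩
    rw [mul_assoc, PowerSeries.inv_mul_cancel μ (by rw [hμ]; exact one_ne_zero), mul_one, hPa]
  · rintro ⟨k, a, γ, hγ, hint, hγμ⟩
    obtain ⟨hγ1, hγeven⟩ := (evenOne_iff γ).1 hγ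
    have hγnegμ : γ * negU μ = ∏ i ∈ Finset.range (2 * k), linF (a i) := by
      rw [← hγeven, ← negU_mul, hγμ, negU_prod]
      simp only [negU_linF, neg_neg]
    have hpaired := dArrow_prod_linF hint
    rw [← hγnegμ, ← hγμ] at hpaired
    exact hpaired.of_mul_left hγ1.ne_zero
end
end

section
/- Suppose μ(u) ∈ 1 + u⁻¹ℂ[u⁻¹] satisfies μ(−u) ⇒ μ(u), and there exists γ(u) ∈ 1 + u⁻²ℂ[[u⁻²]] with γ(u)μ(u) = (1−a₁u⁻¹)⋯(1−a_{2k}u⁻¹) where a_{2i−1} + a_{2i} ∈ ℤ_{≥0} for i = 1,…,k. Then there exists γ′(u) ∈ 1 + u⁻²ℂ[[u⁻²]] and, after re-indexing (a₁,…,a_{2k}), an integer m ≤ k with γ′(u)μ(u) = (1−a₁u⁻¹)⋯(1−a_{2m}u⁻¹), such that a_i ≠ −a_j for all i ≠ j in {1,…,2m}, and a_{2i−1} + a_{2i} ∈ ℤ_{≥0} for i = 1,…,m. -/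
open PowerSeries Polynomial

noncomputable section

/-! Two opposite roots `x`, `-x` contribute the even factor `1 - x²u⁻²`, which can be moved
into `γ`. If they form one pair, drop that pair; if `x` is paired with `y` and `-x` with `z`,
drop `x` and `-x` and pair `y` with `z`, since `y + z = (x + y) + (-x + z) ∈ ℤ≥0`. Each such
step removes one pair, so after finitely many steps no two roots are opposite. -/

lemma evenOne_iff_rescale {f : PS} :
    EvenOne f ↔ PowerSeries.constantCoeff f = 1 ∧ rescale (-1 : ℂ) f = f := by
  refine ⟨fun ⟨h1, hodd⟩ => ⟨h1, ?_⟩, fun ⟨h1, hf⟩ => ⟨h1, fun n hn => ?_⟩⟩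
  · ext n
    rcases Nat.even_or_odd n with hn | hn
    · simp [coeff_rescale, hn.neg_one_pow]
    · simp [coeff_rescale, hodd n hn]
  · have := congrArg (PowerSeries.coeff n) hf
    rw [coeff_rescale, hn.neg_one_pow, neg_one_mul] at this
    exact neg_eq_self.mp this

lemma EvenOne.constantCoeff_ne_zero {f : PS} (hf : EvenOne f) :
    PowerSeries.constantCoeff f ≠ 0 := by
  rw [show PowerSeries.constantCoeff f = 1 from hf.1]
  exact one_ne_zero

lemma evenOne_one : EvenOne 1 :=
  evenOne_iff_rescale.mpr ⟨map_one _, map_one _⟩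

lemma EvenOne.mul {f g : PS} (hf : EvenOne f) (hg : EvenOne g) : EvenOne (f * g) := by
  rw [evenOne_iff_rescale] at *
  simp [hf.1, hg.1, hf.2, hg.2]

lemma EvenOne.inv {f : PS} (hf : EvenOne f) : EvenOne f⁻¹ := by
  have h0 := hf.constantCoeff_ne_zero
  obtain ⟨h1, hresc⟩ := evenOne_iff_rescale.mp hf
  refine evenOne_iff_rescale.mpr ⟨by simp [constantCoeff_inv, h1], ?_⟩
  rw [eq_inv_iff_mul_eq_one h0]
  calc rescale (-1 : ℂ) f⁻¹ * f
      = rescale (-1 : ℂ) f⁻¹ * rescale (-1 : ℂ) f := by rw [hresc]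
    _ = 1 := by rw [← map_mul, PowerSeries.inv_mul_cancel _ h0, map_one]

lemma evenOne_linF_mul_linF_neg (c : ℂ) : EvenOne (linF c * linF (-c)) := by
  refine evenOne_iff_rescale.mpr ⟨by simp [linF], ?_⟩
  have rescale_linF (a : ℂ) : rescale (-1 : ℂ) (linF a) = linF (-a) := by
    ext n
    rcases n with _ | _ | n <;> simp [linF, coeff_rescale, PowerSeries.coeff_one]
  rw [map_mul, rescale_linF, rescale_linF, neg_neg, mul_comm]

lemma IsNonnegInt.add {x y : ℂ} (hx : IsNonnegInt x) (hy : IsNonnegInt y) :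
    IsNonnegInt (x + y) := by
  obtain ⟨n, rfl⟩ := hx
  obtain ⟨m, rfl⟩ := hy
  exact ⟨n + m, by push_cast; ring⟩

lemma List.prod_map_eq_prod_range_getD {α M : Type*} [CommMonoid M] (l : List α) (d : α)
    (g : α → M) : (l.map g).prod = ∏ i ∈ Finset.range l.length, g (l.getD i d) := by
  have hl : (List.range l.length).map (l.getD · d) = l := by
    apply List.ext_getElem (by simp)
    intro i _ hi
    simp [List.getElem?_eq_getElem hi]
  conv_lhs => rw [← hl, List.map_map]
  rfl

lemma List.Nodup.injOn_getD {α : Type*} {l : List α} (hl : l.Nodup) (d : α) :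
    Set.InjOn (l.getD · d) (Finset.range l.length) := by
  intro i hi j hj hij
  simp only [Finset.coe_range, Set.mem_Iio] at hi hj
  simp only [List.getD_eq_getElem _ _ hi, List.getD_eq_getElem _ _ hj] at hij
  exact hl.getElem_inj_iff.mp hij

section Pairs

variable {α : Type*}

def flattenPairs (L : List (α × α)) : List α := L.flatMap fun p => [p.1, p.2]

@[simp]
lemma flattenPairs_nil : flattenPairs ([] : List (α × α)) = [] := rfl

@[simp]
lemma flattenPairs_cons (p : α × α) (L : List (α × α)) :
    flattenPairs (p :: L) = p.1 :: p.2 :: flattenPairs L := rfl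

lemma length_flattenPairs (L : List (α × α)) : (flattenPairs L).length = 2 * L.length := by
  induction L with
  | nil => rfl
  | cons p L ih =>
    simp only [flattenPairs_cons, List.length_cons, ih]
    ring

lemma getD_flattenPairs (L : List (α × α)) (i : ℕ) (d : α) :
    (flattenPairs L).getD (2 * i) d = (L.getD i (d, d)).1 ∧
      (flattenPairs L).getD (2 * i + 1) d = (L.getD i (d, d)).2 := by
  induction L generalizing i with
  | nil => simp
  | cons p L ih =>
    cases i with
    | zero => simp
    | succ i => simpa [Nat.mul_succ] using ih i

lemma flattenPairs_range (k : ℕ) :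
    flattenPairs ((List.range k).map fun i => (2 * i, 2 * i + 1)) = List.range (2 * k) := by
  induction k with
  | zero => rfl
  | succ k ih =>
    rw [Nat.mul_succ, List.range_succ, List.range_succ, List.range_succ, List.map_append,
      flattenPairs, List.flatMap_append, ← flattenPairs, ih]
    simp

-- `v` assigns its root to each entry; in the main theorem the entries are the indices of `a`,
-- so that the re-indexing map of the conclusion can be read off the final list.
variable (v : α → ℂ)

def linFProd (l : List α) : PS := (l.map fun x => linF (-(v x))).prod

def PairsNonnegInt (L : List (α × α)) : Prop := ∀ p ∈ L, IsNonnegInt (v p.1 + v p.2)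

def NoOpposite (l : List α) : Prop := l.Pairwise fun x y => v x ≠ -(v y)

variable {v}

lemma linFProd_cons_cons (x y : α) (l : List α) :
    linFProd v (x :: y :: l) = linF (-(v x)) * linF (-(v y)) * linFProd v l := by
  simp [linFProd, mul_assoc]

lemma List.Perm.linFProd_eq {l l' : List α} (h : l.Perm l') : linFProd v l = linFProd v l' :=
  (h.map _).prod_eq

lemma PairsNonnegInt.of_cons {p : α × α} {L : List (α × α)} (h : PairsNonnegInt v (p :: L)) :
    PairsNonnegInt v L :=
  fun q hq => h q (List.mem_cons_of_mem p hq)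

lemma NoOpposite.getD_ne_neg {l : List α} (h : NoOpposite v l) (d : α) {i j : ℕ}
    (hi : i < l.length) (hj : j < l.length) (hij : i ≠ j) :
    v (l.getD i d) ≠ -(v (l.getD j d)) := by
  rw [List.getD_eq_getElem _ _ hi, List.getD_eq_getElem _ _ hj]
  rcases lt_or_gt_of_ne hij with hlt | hlt
  · exact List.pairwise_iff_getElem.mp h i j hi hj hlt
  · intro heq
    exact List.pairwise_iff_getElem.mp h j i hj hi hlt (by rw [heq, neg_neg])

lemma exists_perm_partner {z : α} {T : List (α × α)} (hT : PairsNonnegInt v T)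
    (hz : z ∈ flattenPairs T) :
    ∃ z' T', (flattenPairs T).Perm (z :: z' :: flattenPairs T') ∧
      IsNonnegInt (v z + v z') ∧ PairsNonnegInt v T' := by
  induction T with
  | nil => simp at hz
  | cons q T ih =>
    have hq := hT q List.mem_cons_self
    rw [flattenPairs_cons, List.mem_cons, List.mem_cons] at hz
    rcases hz with rfl | rfl | hz
    · exact ⟨q.2, T, .refl _, hq, hT.of_cons⟩
    · exact ⟨q.1, T, .swap _ _ _, add_comm (v q.1) (v q.2) ▸ hq, hT.of_cons⟩
    · obtain ⟨z', T', hperm, hzz', hT'⟩ := ih hT.of_cons hz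
      refine ⟨z', q :: T', ?_, hzz', ?_⟩
      · exact (hperm.cons _).cons _ |>.trans
          ((List.perm_append_comm (l₁ := [q.1, q.2]) (l₂ := [z, z'])).append_right _)
      · rintro r (_ | ⟨_, hr⟩)
        exacts [hq, hT' r hr]

lemma exists_perm_merge {x x' z : α} {T : List (α × α)} (hx : IsNonnegInt (v x + v x'))
    (hxz : v x = -(v z)) (hz : z ∈ flattenPairs T) (hT : PairsNonnegInt v T) :
    ∃ L', (x :: x' :: flattenPairs T).Perm (x :: z :: flattenPairs L') ∧
      PairsNonnegInt v L' := by
  obtain ⟨z', T', hperm, hzz', hT'⟩ := exists_perm_partner hT hz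
  refine ⟨(x', z') :: T', ((hperm.cons _).trans (.swap _ _ _)).cons _, ?_⟩
  have hsum : v x' + v z' = (v x + v x') + (v z + v z') := by linear_combination -hxz
  rintro r (_ | ⟨_, hr⟩)
  exacts [hsum ▸ hx.add hzz', hT' r hr]

lemma exists_perm_opposite {L : List (α × α)} (hL : PairsNonnegInt v L)
    (h : ¬NoOpposite v (flattenPairs L)) :
    ∃ x y L', v x = -(v y) ∧ (flattenPairs L).Perm (x :: y :: flattenPairs L') ∧
      PairsNonnegInt v L' := by
  induction L with
  | nil => exact absurd List.Pairwise.nil h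
  | cons p T ih =>
    have hp := hL p List.mem_cons_self
    by_cases h12 : v p.1 = -(v p.2)
    · exact ⟨p.1, p.2, T, h12, .refl _, hL.of_cons⟩
    by_cases h1 : ∃ z ∈ flattenPairs T, v p.1 = -(v z)
    · obtain ⟨z, hz, hxz⟩ := h1
      obtain ⟨L', hperm, hL'⟩ := exists_perm_merge hp hxz hz hL.of_cons
      exact ⟨p.1, z, L', hxz, hperm, hL'⟩
    by_cases h2 : ∃ z ∈ flattenPairs T, v p.2 = -(v z)
    · obtain ⟨z, hz, hxz⟩ := h2
      obtain ⟨L', hperm, hL'⟩ :=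
        exists_perm_merge (add_comm (v p.1) (v p.2) ▸ hp) hxz hz hL.of_cons
      exact ⟨p.2, z, L', hxz, (List.Perm.swap _ _ _).trans hperm, hL'⟩
    have hT : ¬NoOpposite v (flattenPairs T) := by
      intro hT
      simp only [not_exists, not_and] at h1 h2
      refine h (List.Pairwise.cons ?_ (List.Pairwise.cons h2 hT))
      rintro y (_ | ⟨_, hy⟩)
      exacts [h12, h1 y hy]
    obtain ⟨x, y, T', hxy, hperm, hT'⟩ := ih hL.of_cons hT
    refine ⟨x, y, p :: T', hxy, ?_, ?_⟩
    · exact (hperm.cons _).cons _ |>.trans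
        ((List.perm_append_comm (l₁ := [p.1, p.2]) (l₂ := [x, y])).append_right _)
    · rintro r (_ | ⟨_, hr⟩)
      exacts [hp, hT' r hr]

theorem exists_noOpposite_subperm (L : List (α × α)) (hL : PairsNonnegInt v L) :
    ∃ M ε, EvenOne ε ∧ (flattenPairs M).Subperm (flattenPairs L) ∧ PairsNonnegInt v M ∧
      NoOpposite v (flattenPairs M) ∧
      linFProd v (flattenPairs L) = ε * linFProd v (flattenPairs M) := by
  induction hn : L.length using Nat.strong_induction_on generalizing L with
  | _ n ih =>
    by_cases hopp : NoOpposite v (flattenPairs L)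
    · exact ⟨L, 1, evenOne_one, .refl _, hL, hopp, (one_mul _).symm⟩
    obtain ⟨x, y, L', hxy, hperm, hL'⟩ := exists_perm_opposite hL hopp
    have hlen : L'.length < n := by
      have := hperm.length_eq
      simp only [length_flattenPairs, List.length_cons] at this
      omega
    obtain ⟨M, ε, hε, hsub, hM, hMopp, hprod⟩ := ih _ hlen L' hL' rfl
    refine ⟨M, linF (-(v x)) * linF (-(v y)) * ε, ?_, ?_, hM, hMopp, ?_⟩
    · rw [hxy, neg_neg]
      exact (evenOne_linF_mul_linF_neg _).mul hε
    · exact hsub.trans ((List.sublist_cons_self _ _).trans (List.sublist_cons_self _ _)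
        |>.subperm.trans hperm.symm.subperm)
    · rw [hperm.linFProd_eq, linFProd_cons_cons, hprod]
      ring

end Pairs

lemma linFProd_range (a : ℕ → ℂ) (n : ℕ) :
    linFProd a (List.range n) = ∏ i ∈ Finset.range n, linF (-(a i)) :=
  rfl

theorem paired_factorization_reduced_general (μ γ : PS) (k : ℕ) (a : ℕ → ℂ)
    (hγ : EvenOne γ)
    (he : γ * μ = ∏ i ∈ Finset.range (2*k), linF (-(a i)))
    (hpair : ∀ i < k, IsNonnegInt (a (2*i) + a (2*i+1))) :
    ∃ (γ' : PS) (m : ℕ) (b : ℕ → ℂ) (f : ℕ → ℕ), m ≤ k ∧ EvenOne γ' ∧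
      Set.InjOn f ↑(Finset.range (2*m)) ∧
      (∀ i < 2*m, f i < 2*k ∧ b i = a (f i)) ∧
      γ' * μ = ∏ i ∈ Finset.range (2*m), linF (-(b i)) ∧
      (∀ i < 2*m, ∀ j < 2*m, i ≠ j → b i ≠ -(b j)) ∧
      (∀ i < m, IsNonnegInt (b (2*i) + b (2*i+1))) := by
  set L := (List.range k).map fun i => (2 * i, 2 * i + 1)
  obtain ⟨M, ε, hε, hsub, hM, hMopp, hprod⟩ :=
    exists_noOpposite_subperm (v := a) L (by simpa [L, PairsNonnegInt] using hpair)
  rw [flattenPairs_range] at hsub hprod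
  set l := flattenPairs M
  have hl : l.length = 2 * M.length := length_flattenPairs M
  have hγμ : γ * μ = ε * linFProd a l := by
    rw [he, ← hprod, linFProd_range]
  refine ⟨γ * ε⁻¹, M.length, fun i => a (l.getD i 0), (l.getD · 0), ?_, hγ.mul hε.inv,
    ?_, fun i hi => ⟨?_, rfl⟩, ?_, fun i hi j hj => hMopp.getD_ne_neg 0 (hl ▸ hi) (hl ▸ hj),
    fun i hi => ?_⟩
  · simpa [hl] using hsub.length_le
  · obtain ⟨l', hperm, hsubl⟩ := hsub
    exact hl ▸ (hperm.nodup_iff.mp (List.nodup_range.sublist hsubl)).injOn_getD 0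
  · show l.getD i 0 < 2 * k
    rw [List.getD_eq_getElem _ _ (hl ▸ hi)]
    simpa using hsub.subset (List.getElem_mem (hl ▸ hi))
  · rw [mul_right_comm, hγμ, mul_right_comm,
      PowerSeries.mul_inv_cancel _ hε.constantCoeff_ne_zero, one_mul, linFProd,
      List.prod_map_eq_prod_range_getD _ 0, hl]
  · obtain ⟨h1, h2⟩ := getD_flattenPairs M i 0
    simp only [l, h1, h2, List.getD_eq_getElem _ _ hi]
    exact hM _ (List.getElem_mem hi)

/-- A paired factorization of μ can be reduced (by dropping opposite pairs) to one with
no two roots opposite, keeping the pairing property. -/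
theorem paired_factorization_reduced (μ γ : PS) (k : ℕ) (a : ℕ → ℂ)
    (hμ1 : One1 μ) (hμp : IsPolyPS μ)
    (hd : DArrow (negU μ) μ) (hγ : EvenOne γ)
    (he : γ * μ = ∏ i ∈ Finset.range (2*k), linF (-(a i)))
    (hpair : ∀ i < k, IsNonnegInt (a (2*i) + a (2*i+1))) :
    ∃ (γ' : PS) (m : ℕ) (b : ℕ → ℂ) (f : ℕ → ℕ), m ≤ k ∧ EvenOne γ' ∧
      Set.InjOn f ↑(Finset.range (2*m)) ∧
      (∀ i < 2*m, f i < 2*k ∧ b i = a (f i)) ∧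
      γ' * μ = ∏ i ∈ Finset.range (2*m), linF (-(b i)) ∧
      (∀ i < 2*m, ∀ j < 2*m, i ≠ j → b i ≠ -(b j)) ∧
      (∀ i < m, IsNonnegInt (b (2*i) + b (2*i+1))) :=
  paired_factorization_reduced_general μ γ k a hγ he hpair
end
end
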